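/- Pure entangled QCCEs exist in maximally-entangled common-payoff games (Appendix D Corollary): Fix a real payoff matrix (a_{pq}) indexed by p,q ∈ {0,1} and let R = Σ_{p,q} a_{pq}·|e_{pq}⟩⟨e_{pq}| where {|e_{pq}⟩} is the Bell basis of ℂ²⊗ℂ²; consider the common-payoff two-player quantum game in which both players' utility at joint density matrix ρ is Tr(R ρ). If (p*,q*) satisfies a_{p*q*} ≥ (1/4)·Σ_{p,q} a_{pq} (in particular, if a_{p*q*} = max_{p,q} a_{pq}), then the pure maximally-entangled state ρ* = |e_{p*q*}⟩⟨e_{p*q*}| is a quantum coarse correlated equilibrium: Tr(R·(ρ_1' ⊗ Tr_A ρ*)) ≤ Tr(R·ρ*) for all density matrices ρ_1' on ℂ², and Tr(R·((Tr_B ρ*) ⊗ ρ_2')) ≤ Tr(R·ρ*) for all density matrices ρ_2' on ℂ². -/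

import Mathlib

open Matrix Kronecker
open scoped ComplexOrder

/-- A density matrix: positive semidefinite with trace 1. -/
def IsDensity {d : Type*} [Fintype d] (ρ : Matrix d d ℂ) : Prop :=
  ρ.PosSemidef ∧ ρ.trace = 1

/-- The Bell basis vector `|e_{pq}⟩` of `ℂ²⊗ℂ²`:
`e_{pq}(a,b) = (−1)^{q·a}/√2` if `b = a + p` (mod 2), and `0` otherwise. -/
noncomputable def bell (p q : Fin 2) : Fin 2 × Fin 2 → ℂ :=
  fun ab => if ab.2 = ab.1 + p then ((-1 : ℂ) ^ (q.val * ab.1.val)) / (Real.sqrt 2 : ℂ) else 0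

/-- The rank-one projection `|e_{pq}⟩⟨e_{pq}|`. -/
noncomputable def bellProj (p q : Fin 2) :
    Matrix (Fin 2 × Fin 2) (Fin 2 × Fin 2) ℂ :=
  fun x y => bell p q x * (starRingEnd ℂ) (bell p q y)

/-- Partial trace over the first register (the marginal on Bob's register). -/
noncomputable def trA (M : Matrix (Fin 2 × Fin 2) (Fin 2 × Fin 2) ℂ) :
    Matrix (Fin 2) (Fin 2) ℂ :=
  fun b b' => ∑ a, M (a, b) (a, b')

/-- Partial trace over the second register (the marginal on Alice's register). -/
noncomputable def trB (M : Matrix (Fin 2 × Fin 2) (Fin 2 × Fin 2) ℂ) :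
    Matrix (Fin 2) (Fin 2) ℂ :=
  fun a a' => ∑ b, M (a, b) (a', b)

/-! Every Bell state is maximally entangled: both of its marginals are `I/2`. Since the
partial trace is linear, the marginals of the payoff operator `R = ∑ a_{pq} |e_{pq}⟩⟨e_{pq}|`
are `(∑ a_{pq} / 2) • I`, so a unilateral deviation to `ρ'` earns
`Tr(R (ρ' ⊗ I/2)) = ∑ a_{pq} / 4` whatever `ρ'` is, while by orthonormality of the Bell basis
staying at `|e_{p*q*}⟩⟨e_{p*q*}|` earns `a_{p*q*}`. -/

lemma bellProj_apply (p q : Fin 2) (x y : Fin 2 × Fin 2) :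
    bellProj p q x y =
      if x.2 = x.1 + p ∧ y.2 = y.1 + p then
        (-1 : ℂ) ^ (q.val * x.1.val + q.val * y.1.val) / 2 else 0 := by
  have hsqrt : (Real.sqrt 2 : ℂ) ^ 2 = 2 := by
    norm_cast
    exact Real.sq_sqrt zero_le_two
  simp only [bellProj, bell]
  split_ifs <;> simp_all [map_div₀, pow_add]
  field_simp
  exact hsqrt.symm

lemma trA_bellProj (p q : Fin 2) : trA (bellProj p q) = (2⁻¹ : ℂ) • 1 := by
  ext b b'
  fin_cases p <;> fin_cases q <;> fin_cases b <;> fin_cases b' <;>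
    simp [trA, Fin.sum_univ_two, bellProj_apply]

lemma trB_bellProj (p q : Fin 2) : trB (bellProj p q) = (2⁻¹ : ℂ) • 1 := by
  ext a a'
  fin_cases p <;> fin_cases q <;> fin_cases a <;> fin_cases a' <;>
    simp [trB, Fin.sum_univ_two, bellProj_apply]

lemma trace_bellProj_mul_bellProj (p q p' q' : Fin 2) :
    (bellProj p q * bellProj p' q').trace = if p = p' ∧ q = q' then 1 else 0 := by
  fin_cases p <;> fin_cases q <;> fin_cases p' <;> fin_cases q' <;>
    simp [Matrix.trace, Matrix.mul_apply, Fintype.sum_prod_type, Fin.sum_univ_two,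
      bellProj_apply] <;> norm_num

lemma trB_sum {ι : Type*} (s : Finset ι)
    (M : ι → Matrix (Fin 2 × Fin 2) (Fin 2 × Fin 2) ℂ) :
    trB (∑ i ∈ s, M i) = ∑ i ∈ s, trB (M i) := by
  ext a a'
  simp only [trB, Matrix.sum_apply]
  exact Finset.sum_comm

lemma trB_smul (c : ℂ) (M : Matrix (Fin 2 × Fin 2) (Fin 2 × Fin 2) ℂ) :
    trB (c • M) = c • trB M := by
  ext a a'
  simp only [trB, Matrix.smul_apply, smul_eq_mul, Finset.mul_sum]

lemma trA_sum {ι : Type*} (s : Finset ι)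
    (M : ι → Matrix (Fin 2 × Fin 2) (Fin 2 × Fin 2) ℂ) :
    trA (∑ i ∈ s, M i) = ∑ i ∈ s, trA (M i) := by
  ext b b'
  simp only [trA, Matrix.sum_apply]
  exact Finset.sum_comm

lemma trA_smul (c : ℂ) (M : Matrix (Fin 2 × Fin 2) (Fin 2 × Fin 2) ℂ) :
    trA (c • M) = c • trA M := by
  ext b b'
  simp only [trA, Matrix.smul_apply, smul_eq_mul, Finset.mul_sum]

lemma trace_mul_kronecker_one (M : Matrix (Fin 2 × Fin 2) (Fin 2 × Fin 2) ℂ)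
    (X : Matrix (Fin 2) (Fin 2) ℂ) : (M * (X ⊗ₖ 1)).trace = (trB M * X).trace := by
  simp only [Matrix.trace, Matrix.diag, Matrix.mul_apply, Fintype.sum_prod_type, trB,
    Matrix.kroneckerMap_apply, Matrix.one_apply, mul_ite, mul_one, mul_zero, Finset.sum_ite_eq',
    Finset.mem_univ, if_true, Finset.sum_mul]
  exact Finset.sum_congr rfl fun _ _ => Finset.sum_comm

lemma trace_mul_one_kronecker (M : Matrix (Fin 2 × Fin 2) (Fin 2 × Fin 2) ℂ)
    (Y : Matrix (Fin 2) (Fin 2) ℂ) : (M * (1 ⊗ₖ Y)).trace = (trA M * Y).trace := by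
  simp only [Matrix.trace, Matrix.diag, Matrix.mul_apply, Fintype.sum_prod_type, trA,
    Matrix.kroneckerMap_apply, Matrix.one_apply, ite_mul, one_mul, zero_mul, mul_ite, mul_zero,
    Finset.sum_mul]
  conv_lhs => enter [2, a, 2, b]; rw [Finset.sum_comm]
  simp only [Finset.sum_ite_eq', Finset.mem_univ, if_true]
  rw [Finset.sum_comm]
  exact Finset.sum_congr rfl fun _ _ => Finset.sum_comm

noncomputable def bellPayoff (a : Fin 2 → Fin 2 → ℝ) :
    Matrix (Fin 2 × Fin 2) (Fin 2 × Fin 2) ℂ :=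
  ∑ p, ∑ q, (a p q : ℂ) • bellProj p q

lemma trace_bellPayoff_mul (a : Fin 2 → Fin 2 → ℝ)
    (M : Matrix (Fin 2 × Fin 2) (Fin 2 × Fin 2) ℂ) :
    (bellPayoff a * M).trace = ∑ p, ∑ q, (a p q : ℂ) * (bellProj p q * M).trace := by
  simp only [bellPayoff, Finset.sum_mul, Matrix.smul_mul, Matrix.trace_sum, Matrix.trace_smul,
    smul_eq_mul]

lemma trace_bellPayoff_mul_bellProj (a : Fin 2 → Fin 2 → ℝ) (p q : Fin 2) :
    (bellPayoff a * bellProj p q).trace = a p q := by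
  simp [trace_bellPayoff_mul, trace_bellProj_mul_bellProj, ite_and]

lemma trB_bellPayoff (a : Fin 2 → Fin 2 → ℝ) :
    trB (bellPayoff a) = ((∑ p, ∑ q, a p q : ℝ) / 2 : ℂ) • 1 := by
  simp only [bellPayoff, trB_sum, trB_smul, trB_bellProj, smul_smul, ← Finset.sum_smul]
  push_cast
  rw [Finset.sum_div, Finset.sum_congr rfl fun _ _ => Finset.sum_div ..]
  simp only [div_eq_mul_inv]

lemma trA_bellPayoff (a : Fin 2 → Fin 2 → ℝ) :
    trA (bellPayoff a) = ((∑ p, ∑ q, a p q : ℝ) / 2 : ℂ) • 1 := by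
  simp only [bellPayoff, trA_sum, trA_smul, trA_bellProj, smul_smul, ← Finset.sum_smul]
  push_cast
  rw [Finset.sum_div, Finset.sum_congr rfl fun _ _ => Finset.sum_div ..]
  simp only [div_eq_mul_inv]

lemma trace_bellPayoff_mul_kronecker_half_smul_one (a : Fin 2 → Fin 2 → ℝ)
    (X : Matrix (Fin 2) (Fin 2) ℂ) :
    (bellPayoff a * (X ⊗ₖ ((2⁻¹ : ℂ) • 1))).trace
      = ((∑ p, ∑ q, a p q : ℝ) / 4 : ℂ) * X.trace := by
  rw [Matrix.kronecker_smul, Matrix.mul_smul, Matrix.trace_smul, trace_mul_kronecker_one,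
    trB_bellPayoff, Matrix.smul_mul, Matrix.one_mul, Matrix.trace_smul, smul_eq_mul, smul_eq_mul]
  ring

lemma trace_bellPayoff_mul_half_smul_one_kronecker (a : Fin 2 → Fin 2 → ℝ)
    (Y : Matrix (Fin 2) (Fin 2) ℂ) :
    (bellPayoff a * (((2⁻¹ : ℂ) • 1) ⊗ₖ Y)).trace
      = ((∑ p, ∑ q, a p q : ℝ) / 4 : ℂ) * Y.trace := by
  rw [Matrix.smul_kronecker, Matrix.mul_smul, Matrix.trace_smul, trace_mul_one_kronecker,
    trA_bellPayoff, Matrix.smul_mul, Matrix.one_mul, Matrix.trace_smul, smul_eq_mul, smul_eq_mul]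
  ring

/-- Pure entangled QCCEs exist in maximally-entangled common-payoff games
(Appendix D Corollary). -/
theorem stmt_14 (a : Fin 2 → Fin 2 → ℝ) (ps qs : Fin 2)
    (hmax : (1 / 4 : ℝ) * ∑ p, ∑ q, a p q ≤ a ps qs) :
    let R : Matrix (Fin 2 × Fin 2) (Fin 2 × Fin 2) ℂ :=
      ∑ p, ∑ q, (a p q : ℂ) • bellProj p q
    let ρstar : Matrix (Fin 2 × Fin 2) (Fin 2 × Fin 2) ℂ := bellProj ps qs
    (∀ ρ₁' : Matrix (Fin 2) (Fin 2) ℂ, IsDensity ρ₁' →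
      ((R * (ρ₁' ⊗ₖ trA ρstar)).trace).re ≤ ((R * ρstar).trace).re)
    ∧ (∀ ρ₂' : Matrix (Fin 2) (Fin 2) ℂ, IsDensity ρ₂' →
      ((R * ((trB ρstar) ⊗ₖ ρ₂')).trace).re ≤ ((R * ρstar).trace).re) := by
  intro R ρstar
  have hR : R = bellPayoff a := rfl
  have hvalue : ((R * ρstar).trace).re = a ps qs := by
    rw [hR, trace_bellPayoff_mul_bellProj, Complex.ofReal_re]
  have hdeviation : (((∑ p, ∑ q, a p q : ℝ) / 4 : ℂ)).re ≤ a ps qs := by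
    norm_cast
    linarith
  refine ⟨fun ρ₁' hρ₁' => ?_, fun ρ₂' hρ₂' => ?_⟩
  · rwa [hvalue, hR, trA_bellProj, trace_bellPayoff_mul_kronecker_half_smul_one, hρ₁'.2,
      mul_one]
  · rwa [hvalue, hR, trB_bellProj, trace_bellPayoff_mul_half_smul_one_kronecker, hρ₂'.2,
      mul_one]
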